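/- arXiv:2407.03295 — 3 statements merged into one kernel-verified Lean document; each statement's English description precedes it below -/
import Mathlib

section
/- Let k ≥ 0 be an integer and δ_k := 2πk/(2k+1). Then for all s, t in the circle S^1 (with geodesic metric d_1), |d_1(s,t) - d_1((2k+1)s, (2k+1)t)| ≤ δ_k. -/
open Real

lemma coe_sub_int_mul (p y : ℝ) (r : ℤ) :
    (((y - r * p : ℝ)) : AddCircle p) = (y : AddCircle p) := by
  rw [QuotientAddGroup.eq_iff_sub_mem]
  refine AddSubgroup.mem_zmultiples_iff.mpr ⟨-r, ?_⟩
  rw [zsmul_eq_mul]; push_cast; ring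

lemma aux_stmt3 (k : ℕ) (y : ℝ) (hy : |y| ≤ π) :
    |‖(y : AddCircle (2 * π))‖ - ‖(((2 * (k : ℝ) + 1) * y : ℝ) : AddCircle (2 * π))‖| ≤
      2 * π * k / (2 * k + 1) := by
  have hπ : (0:ℝ) < π := Real.pi_pos
  have hk0 : (0:ℝ) ≤ (k:ℝ) := Nat.cast_nonneg k
  set p : ℝ := 2 * π with hp
  have hp0 : 0 < p := by positivity
  set M : ℝ := 2 * (k : ℝ) + 1 with hM
  have hM1 : (1:ℝ) ≤ M := by rw [hM]; linarith
  have hd : ‖(y : AddCircle p)‖ = |y| := by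
    rw [AddCircle.norm_coe_eq_abs_iff p (ne_of_gt hp0), abs_of_pos hp0]
    rw [hp]; linarith
  set n : ℤ := round (p⁻¹ * (M * y)) with hn
  have hd' : ‖((M * y : ℝ) : AddCircle p)‖ = |M * y - n * p| := AddCircle.norm_eq p
  rw [hd, hd']
  have hδ : 2 * π * (k:ℝ) / (2 * k + 1) = p * k / M := by rw [hp, hM]; try ring
  rw [hδ, abs_sub_le_iff]
  constructor
  · -- |y| - d' ≤ δ : use representative y - r * p
    set r : ℤ := round ((n : ℝ) / M) with hr
    have hrep : (((y - r * p : ℝ)) : AddCircle p) = (y : AddCircle p) :=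
      coe_sub_int_mul p y r
    have h1 : |y| ≤ |y - r * p| := by
      calc |y| = ‖(y : AddCircle p)‖ := hd.symm
        _ = ‖(((y - r * p : ℝ)) : AddCircle p)‖ := by rw [hrep]
        _ ≤ |((y - r * p : ℝ))| := QuotientAddGroup.norm_mk_le_norm
    have hMpos : (0:ℝ) < M := by linarith
    have hnr : |(n : ℝ) - M * r| ≤ (k : ℝ) := by
      have h2 : |(n : ℝ) / M - r| ≤ 1 / 2 := abs_sub_round _
      have h3 : |(n : ℝ) - M * r| ≤ M / 2 := by
        have he : |M * ((n:ℝ)/M - (r:ℝ))| = |(n:ℝ) - M * (r:ℝ)| := by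
          rw [mul_sub, mul_div_cancel₀ _ (ne_of_gt hMpos)]
        calc |(n:ℝ) - M * (r:ℝ)| = |M * ((n:ℝ)/M - (r:ℝ))| := he.symm
          _ = |M| * |(n:ℝ)/M - (r:ℝ)| := abs_mul _ _
          _ ≤ |M| * (1/2) := mul_le_mul_of_nonneg_left h2 (abs_nonneg _)
          _ = M/2 := by rw [abs_of_pos hMpos]; ring
      have h5 : (|n - (2 * k + 1) * r| : ℤ) ≤ (k : ℤ) := by
        have h4 : |((n - (2 * k + 1) * r : ℤ) : ℝ)| ≤ (k : ℝ) + 1/2 := by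
          push_cast
          calc |(n:ℝ) - (2*(k:ℝ)+1)*r| = |(n:ℝ) - M * r| := by rw [hM]
            _ ≤ M / 2 := h3
            _ = (k:ℝ) + 1/2 := by rw [hM]; ring
        have h7 : ((|n - (2*k+1)*r| : ℤ) : ℝ) < (k : ℝ) + 1 := by
          rw [Int.cast_abs]
          push_cast at h4 ⊢
          linarith
        have h8 : (|n - (2*k+1)*r| : ℤ) < (k : ℤ) + 1 := by exact_mod_cast h7
        omega
      calc |(n : ℝ) - M * r| = |((n - (2 * k + 1) * r : ℤ) : ℝ)| := by
            rw [hM]; push_cast; ring_nf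
        _ = ((|n - (2*k+1)*r| : ℤ) : ℝ) := by rw [Int.cast_abs]
        _ ≤ (k : ℝ) := by exact_mod_cast h5
    -- combine
    have h6 : |y - r * p| ≤ (|M * y - n * p| + (k : ℝ) * p) / M := by
      rw [le_div_iff₀ hMpos]
      calc |y - r * p| * M = |M| * |y - r * p| := by rw [abs_of_pos hMpos]; ring
        _ = |M * y - M * (r * p)| := by rw [← abs_mul]; ring_nf
        _ = |(M * y - n * p) + ((n:ℝ) - M * r) * p| := by ring_nf
        _ ≤ |M * y - n * p| + |((n:ℝ) - M * r) * p| := abs_add_le _ _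
        _ = |M * y - n * p| + |(n:ℝ) - M * r| * p := by rw [abs_mul, abs_of_pos hp0]
        _ ≤ |M * y - n * p| + (k:ℝ) * p := by nlinarith
    have h7 : (|M * y - n * p| + (k : ℝ) * p) / M ≤ |M * y - n * p| + p * k / M := by
      have hc : p * (k:ℝ) / M * M = p * k := div_mul_cancel₀ _ (ne_of_gt hMpos)
      rw [div_le_iff₀ hMpos]
      have h0 := abs_nonneg (M * y - n * p)
      have h00 : |M * y - n * p| * 1 ≤ |M * y - n * p| * M :=
        mul_le_mul_of_nonneg_left hM1 h0
      nlinarith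
    linarith
  · -- d' - |y| ≤ δ
    by_cases hcase : |y| ≤ p / (2 * M)
    · have h1 : |M * y - n * p| ≤ |M * y| :=
        (AddCircle.norm_eq p).symm.trans_le (QuotientAddGroup.norm_mk_le_norm)
      have h2 : |M * y| = M * |y| := by rw [abs_mul, abs_of_pos (by linarith)]
      have hMpos : (0:ℝ) < M := by linarith
      have h3 : (M - 1) * |y| ≤ (M - 1) * (p / (2 * M)) := by
        apply mul_le_mul_of_nonneg_left hcase; linarith
      have h4 : (M - 1) * (p / (2 * M)) = p * k / M := by
        rw [hM]; field_simp; ring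
      nlinarith [abs_nonneg y]
    · push_neg at hcase
      have h1 : |M * y - n * p| ≤ p / 2 := by
        have := AddCircle.norm_le_half_period p (ne_of_gt hp0) (x := ((M * y : ℝ) : AddCircle p))
        rwa [AddCircle.norm_eq p, abs_of_pos hp0] at this
      have hMpos : (0:ℝ) < M := by linarith
      have h4 : p / 2 - p / (2 * M) = p * k / M := by
        rw [hM]; field_simp; ring
      have h5 : p / (2 * M) ≤ |y| := hcase.le
      linarith

/-- For `s, t` in the circle `S¹ = ℝ/2πℤ` with its geodesic distance, and any integer `k ≥ 0`,
`|d₁(s,t) − d₁((2k+1)s, (2k+1)t)| ≤ δ_k = 2πk/(2k+1)`. -/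
theorem stmt3 (k : ℕ) (s t : AddCircle (2 * π)) :
    |dist s t - dist ((2 * k + 1) • s) ((2 * k + 1) • t)| ≤ 2 * π * k / (2 * k + 1) := by
  have hπ : (0:ℝ) < π := Real.pi_pos
  rw [dist_eq_norm, dist_eq_norm, ← smul_sub]
  obtain ⟨x, hx⟩ := QuotientAddGroup.mk_surjective (s - t)
  set y : ℝ := x - round ((2 * π)⁻¹ * x) * (2 * π) with hy
  have hrep : ((y : ℝ) : AddCircle (2 * π)) = s - t := by
    rw [hy, coe_sub_int_mul]
    exact hx
  have hyb : |y| ≤ π := by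
    have := AddCircle.norm_le_half_period (2 * π) (by positivity : (2*π:ℝ) ≠ 0)
      (x := ((x : ℝ) : AddCircle (2 * π)))
    rw [AddCircle.norm_eq (2*π)] at this
    rw [abs_of_pos (by positivity : (0:ℝ) < 2*π)] at this
    calc |y| = |x - round ((2 * π)⁻¹ * x) * (2 * π)| := by rw [hy]
      _ ≤ 2 * π / 2 := this
      _ = π := by ring
  have key := aux_stmt3 k y hyb
  rw [← hrep]
  have hsm : (2 * k + 1) • ((y : ℝ) : AddCircle (2 * π)) =
      (((2 * (k:ℝ) + 1) * y : ℝ) : AddCircle (2 * π)) := by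
    rw [← AddCircle.coe_nsmul]
    congr 1
    push_cast [nsmul_eq_mul]
    ring
  rw [hsm]
  exact key
end

section
/- Let h_k(t) := (1/(k+1)) Σ_{ℓ=0}^{k} cos((2ℓ+1)t) and δ_k := 2πk/(2k+1). Then for all t ∈ [0, δ_k], h_k(t) ≥ cos(δ_k). -/
/-!
Since `cos δ_k ≤ cos (2π/3) = -1/2`, it suffices to show `h_k ≥ -1/2` on `[0, π - π/(2k+2)]`.
With `n = k + 1`, the sum telescopes to `∑_{ℓ<n} cos((2ℓ+1)t) = sin(2nt) / (2 sin t)`.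
For `2nt ≤ π` this is nonnegative; beyond, `t` and `π - t` are both at least `π/(2n)`,
so Jordan's inequality gives `sin t ≥ 1/n` and the sum is at least `-1/(2 sin t) ≥ -n/2`.
-/

open Real Finset

/-- `h_k(t) = (1/(k+1)) ∑_{ℓ=0}^{k} cos((2ℓ+1) t)`. -/
noncomputable def hkFun (k : ℕ) (t : ℝ) : ℝ :=
  (∑ ℓ ∈ Finset.range (k + 1), Real.cos ((2 * (ℓ : ℝ) + 1) * t)) / (k + 1)

theorem two_mul_sin_mul_sum_cos_odd (n : ℕ) (t : ℝ) :
    2 * sin t * ∑ ℓ ∈ range n, cos ((2 * (ℓ : ℝ) + 1) * t) = sin (2 * n * t) := by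
  induction n with
  | zero => simp
  | succ n ih =>
    have telescope : sin (2 * ((n : ℝ) + 1) * t) - sin (2 * n * t)
        = 2 * sin t * cos ((2 * (n : ℝ) + 1) * t) := by
      rw [sin_sub_sin]; ring_nf
    rw [sum_range_succ, mul_add, ih]
    push_cast
    linarith

theorem sum_cos_odd_nonneg {n : ℕ} {t : ℝ} (ht₀ : 0 ≤ t) (ht : 2 * n * t ≤ π) :
    0 ≤ ∑ ℓ ∈ range n, cos ((2 * (ℓ : ℝ) + 1) * t) := by
  rcases ht₀.eq_or_lt with rfl | ht₀
  · simp
  rcases n.eq_zero_or_pos with rfl | hn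
  · simp
  have hn' : (1 : ℝ) ≤ n := by exact_mod_cast hn
  have hsin : 0 < 2 * sin t := by
    have := sin_pos_of_pos_of_lt_pi ht₀ (by nlinarith [pi_pos])
    positivity
  refine (mul_nonneg_iff_of_pos_left hsin).mp ?_
  rw [two_mul_sin_mul_sum_cos_odd]
  exact sin_nonneg_of_nonneg_of_le_pi (by positivity) ht

theorem two_div_pi_mul_le_sin_of_mem_Icc {b t : ℝ} (hb : 0 ≤ b) (ht : t ∈ Set.Icc b (π - b)) :
    2 / π * b ≤ sin t := by
  have h2π : 0 ≤ 2 / π := by positivity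
  rcases le_total t (π / 2) with h | h
  · exact (mul_le_mul_of_nonneg_left ht.1 h2π).trans (mul_le_sin (hb.trans ht.1) h)
  · rw [← sin_pi_sub]
    exact (mul_le_mul_of_nonneg_left (by linarith [ht.2]) h2π).trans
      (mul_le_sin (by linarith [ht.2]) (by linarith))

theorem neg_half_le_sum_cos_odd {n : ℕ} {t : ℝ} (ht : t ∈ Set.Icc 0 (π - π / (2 * n))) :
    -(n / 2 : ℝ) ≤ ∑ ℓ ∈ range n, cos ((2 * (ℓ : ℝ) + 1) * t) := by
  set S := ∑ ℓ ∈ range n, cos ((2 * (ℓ : ℝ) + 1) * t)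
  rcases le_or_gt (2 * n * t) π with hsmall | hlarge
  · linarith [sum_cos_odd_nonneg ht.1 hsmall, (Nat.cast_nonneg n : (0 : ℝ) ≤ n)]
  have hn : (0 : ℝ) < n := by
    rcases n.eq_zero_or_pos with rfl | hn
    · simp at hlarge; linarith [pi_pos]
    · exact_mod_cast hn
  have hsin : 1 ≤ n * sin t := by
    have hb : t ∈ Set.Icc (π / (2 * n)) (π - π / (2 * n)) :=
      ⟨by rw [div_le_iff₀ (by positivity)]; linarith, ht.2⟩
    have := two_div_pi_mul_le_sin_of_mem_Icc (by positivity) hb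
    rwa [show 2 / π * (π / (2 * n)) = 1 / n by field_simp, div_le_iff₀' hn] at this
  have hkernel : -1 ≤ 2 * sin t * S := by
    rw [two_mul_sin_mul_sum_cos_odd]; exact neg_one_le_sin _
  rcases le_or_gt 0 S with hS | hS
  · linarith
  · nlinarith [mul_le_mul_of_nonpos_right hsin hS.le]

theorem cos_two_pi_mul_div_le_neg_half {k : ℕ} (hk : 1 ≤ k) :
    cos (2 * π * k / (2 * k + 1)) ≤ -(1 / 2) := by
  have hk' : (1 : ℝ) ≤ k := by exact_mod_cast hk
  rw [← cos_pi_div_three, ← cos_pi_sub]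
  apply cos_le_cos_of_nonneg_of_le_pi (by linarith [pi_pos])
  · rw [div_le_iff₀ (by positivity)]; nlinarith [pi_pos]
  · rw [le_div_iff₀ (by positivity)]; nlinarith [pi_pos]

/-- For `k ≥ 1` and all `t ∈ [0, δ_k]` where `δ_k = 2πk/(2k+1)`,
one has `h_k(t) ≥ cos(δ_k)`. -/
theorem stmt6 (k : ℕ) (hk : 1 ≤ k) (t : ℝ)
    (ht : t ∈ Set.Icc (0 : ℝ) (2 * π * k / (2 * k + 1))) :
    Real.cos (2 * π * k / (2 * k + 1)) ≤ hkFun k t := by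
  have hδ : 2 * π * k / (2 * k + 1) ≤ π - π / (2 * ((k + 1 : ℕ) : ℝ)) := by
    have hgap : π - π / (2 * ((k + 1 : ℕ) : ℝ)) - 2 * π * k / (2 * k + 1)
        = π / ((2 * k + 1) * (2 * k + 2)) := by
      push_cast; field_simp; ring
    have : 0 < π / ((2 * k + 1) * (2 * k + 2)) := by positivity
    linarith
  have hsum := neg_half_le_sum_cos_odd ⟨ht.1, ht.2.trans hδ⟩
  have hh : -(1 / 2) ≤ hkFun k t := by
    rw [hkFun, le_div_iff₀ (by positivity)]
    push_cast at hsum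
    linarith
  exact (cos_two_pi_mul_div_le_neg_half hk).trans hh
end

section
/- Let P_{ζ,θ}(t) := cos(ζ)cos(t) + sin(ζ)cos(3t − θ) for ζ ∈ [0, π/2) and θ ∈ [−π, π). Then every global maximum point of P_{ζ,θ} on [−π, π) lies in the interval [−π/3, π/3]. -/
/-! The term `cos (3t − θ)` is invariant under `t ↦ t ± 2π/3`, so such a shift changes `P_{ζ,θ}`
only through `cos ζ · cos t`, with `cos ζ > 0`. A point of `[−π, π)` outside `[−π/3, π/3]` can be
shifted by `±2π/3` to a point of `[−π, π)` closer to `0`, where `cos` is strictly larger; so it is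
not a maximum point. -/

open Real

/-- `P_{ζ,θ}(t) = cos ζ · cos t + sin ζ · cos(3t − θ)`. -/
noncomputable def Pfun (ζ θ t : ℝ) : ℝ :=
  Real.cos ζ * Real.cos t + Real.sin ζ * Real.cos (3 * t - θ)

theorem Pfun_add_int_mul_sub (ζ θ t : ℝ) (k : ℤ) :
    Pfun ζ θ (t + k * (2 * π / 3)) - Pfun ζ θ t =
      cos ζ * (cos (t + k * (2 * π / 3)) - cos t) := by
  have hperiod : cos (3 * (t + k * (2 * π / 3)) - θ) = cos (3 * t - θ) := by
    rw [← cos_add_int_mul_two_pi (3 * t - θ) k]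
    ring_nf
  simp only [Pfun, hperiod]
  ring

theorem Real.cos_lt_cos_of_abs_lt {u t : ℝ} (hut : |u| < |t|) (ht : |t| ≤ π) : cos t < cos u := by
  rw [← cos_abs u, ← cos_abs t]
  exact cos_lt_cos_of_nonneg_of_le_pi (abs_nonneg u) ht hut

theorem exists_int_mul_shift_abs_lt {t : ℝ} (ht : t ∈ Set.Ico (-π) π) (hout : π / 3 < |t|) :
    ∃ k : ℤ, t + k * (2 * π / 3) ∈ Set.Ico (-π) π ∧ |t + k * (2 * π / 3)| < |t| := by
  obtain ⟨htl, htr⟩ := ht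
  rcases lt_abs.mp hout with hpos | hneg
  · refine ⟨-1, ⟨by push_cast; linarith, by push_cast; linarith⟩, ?_⟩
    rw [abs_of_pos (by linarith : 0 < t), abs_lt]
    push_cast
    constructor <;> linarith
  · refine ⟨1, ⟨by push_cast; linarith, by push_cast; linarith⟩, ?_⟩
    rw [abs_of_neg (by linarith : t < 0), abs_lt]
    push_cast
    constructor <;> linarith

theorem stmt12_general (ζ θ : ℝ) (hζ : ζ ∈ Set.Ico (0 : ℝ) (π / 2))
    (t : ℝ) (ht : t ∈ Set.Ico (-π) π)
    (hmax : ∀ u ∈ Set.Ico (-π) π, Pfun ζ θ u ≤ Pfun ζ θ t) :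
    t ∈ Set.Icc (-(π / 3)) (π / 3) := by
  rw [Set.mem_Icc, ← abs_le]
  by_contra! hout
  have hcosζ : 0 < cos ζ := cos_pos_of_mem_Ioo ⟨by linarith [pi_pos, hζ.1], hζ.2⟩
  obtain ⟨k, hu, hcloser⟩ := exists_int_mul_shift_abs_lt ht hout
  have ht_le_pi : |t| ≤ π := abs_le.mpr ⟨ht.1, ht.2.le⟩
  have hcos := cos_lt_cos_of_abs_lt hcloser ht_le_pi
  have hgain := Pfun_add_int_mul_sub ζ θ t k
  linarith [hmax _ hu, mul_pos hcosζ (sub_pos.mpr hcos)]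

/-- For `ζ ∈ [0, π/2)` and `θ ∈ [−π, π)`, every global maximum point of `P_{ζ,θ}`
on `[−π, π)` lies in `[−π/3, π/3]`. -/
theorem stmt12 (ζ θ : ℝ) (hζ : ζ ∈ Set.Ico (0 : ℝ) (π / 2))
    (hθ : θ ∈ Set.Ico (-π) π) (t : ℝ) (ht : t ∈ Set.Ico (-π) π)
    (hmax : ∀ u ∈ Set.Ico (-π) π, Pfun ζ θ u ≤ Pfun ζ θ t) :
    t ∈ Set.Icc (-(π / 3)) (π / 3) :=
  stmt12_general ζ θ hζ t ht hmax
end
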